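/- arXiv:2407.19750 — 3 statements merged into one kernel-verified Lean document; each statement's English description precedes it below -/
import Mathlib

section
/- Let g and h be finite-dimensional real Lie algebras and let I ⊆ ℝ be an open interval containing 0 and 1. Let c : I → h and ψ : I → Hom_ℝ(g,h) be smooth curves. Then the following are equivalent. (i) For all smooth functions f, k : I → ℝ and all smooth curves x, y : I → g the identity (f·k′ − k·f′)·c(t) + ψ_t([x(t),y(t)]_g + f(t)·y′(t) − k(t)·x′(t)) = f(t)·(d/dt)(k(t)·c(t) + ψ_t(y(t))) − k(t)·(d/dt)(f(t)·c(t) + ψ_t(x(t))) + [f(t)·c(t) + ψ_t(x(t)), k(t)·c(t) + ψ_t(y(t))]_h holds for every t ∈ I (primes denoting derivatives in t). (ii) For every t ∈ I the linear map ψ_t : g → h preserves Lie brackets, and the differential equation (∂_t ψ)_t(x) = −[c(t), ψ_t(x)]_h holds for every t ∈ I and x ∈ g. (Condition (i) is exactly the bracket-compatibility condition saying that the vector bundle map Φ : TI × g → h, Φ(r·∂_t|_s, x) := r·c(s) + ψ_s(x), is a morphism of Lie algebroids, i.e., an LA-homotopy between the Lie algebra morphisms ψ_0 and ψ_1.) 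-/
/-! Testing the bracket-compatibility condition on constant data recovers the two conditions of
(ii): `f = k = 0` with constant `x, y` gives bracket preservation, and `f = 0`, `k = 1`, `y = 0`
gives the differential equation for `ψ`. Conversely, expanding both derivatives by the Leibniz
rule and substituting the differential equation, all derivative terms cancel against the bracket
`[f c + ψ x, k c + ψ y]`, once `[c, c] = 0` and antisymmetry of `Bh` are used. -/

/-- Condition (i): `Φ(r ∂ₜ, x) = r c + ψ x` intertwines the brackets of the Lie algebroids
`TI × g` and `h`, tested on the sections `f ∂ₜ + x` and `k ∂ₜ + y`. -/
def BracketCompatibleOn {g h : Type*} [NormedAddCommGroup g] [NormedSpace ℝ g]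
    [NormedAddCommGroup h] [NormedSpace ℝ h]
    (Bg : g →L[ℝ] g →L[ℝ] g) (Bh : h →L[ℝ] h →L[ℝ] h) (I : Set ℝ)
    (c : ℝ → h) (ψ : ℝ → (g →L[ℝ] h)) : Prop :=
  ∀ (f k : ℝ → ℝ) (x y : ℝ → g),
    ContDiffOn ℝ (⊤ : ℕ∞) f I → ContDiffOn ℝ (⊤ : ℕ∞) k I →
    ContDiffOn ℝ (⊤ : ℕ∞) x I → ContDiffOn ℝ (⊤ : ℕ∞) y I →
    ∀ t ∈ I,
      (f t * deriv k t - k t * deriv f t) • c t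
          + ψ t (Bg (x t) (y t) + f t • deriv y t - k t • deriv x t)
        = f t • deriv (fun s => k s • c s + ψ s (y s)) t
          - k t • deriv (fun s => f s • c s + ψ s (x s)) t
          + Bh (f t • c t + ψ t (x t)) (k t • c t + ψ t (y t))

section

variable {g h : Type*} [NormedAddCommGroup g] [NormedSpace ℝ g]
  [NormedAddCommGroup h] [NormedSpace ℝ h]
  {Bg : g →L[ℝ] g →L[ℝ] g} {Bh : h →L[ℝ] h →L[ℝ] h} {I : Set ℝ}
  {c : ℝ → h} {ψ : ℝ → (g →L[ℝ] h)} {t : ℝ}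

theorem ContinuousLinearMap.neg_apply_apply_of_alt (hBh_alt : ∀ u : h, Bh u u = 0)
    (u v : h) : -Bh u v = Bh v u :=
  LinearMap.IsAlt.neg (B := Bh.toLinearMap₁₂) hBh_alt u v

theorem ContDiffOn.hasDerivAt_deriv {E : Type*} [NormedAddCommGroup E] [NormedSpace ℝ E]
    {u : ℝ → E} {n : WithTop ℕ∞} (hu : ContDiffOn ℝ n u I) (hn : n ≠ 0) (hI : IsOpen I)
    (ht : t ∈ I) : HasDerivAt u (deriv u t) t :=
  ((hu.differentiableOn hn).differentiableAt (hI.mem_nhds ht)).hasDerivAt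

namespace BracketCompatibleOn

theorem map_bracket (H : BracketCompatibleOn Bg Bh I c ψ) (ht : t ∈ I) (x y : g) :
    ψ t (Bg x y) = Bh (ψ t x) (ψ t y) := by
  simpa using H (fun _ => 0) (fun _ => 0) (fun _ => x) (fun _ => y)
    contDiffOn_const contDiffOn_const contDiffOn_const contDiffOn_const t ht

theorem deriv_apply (hBh_alt : ∀ u : h, Bh u u = 0) (H : BracketCompatibleOn Bg Bh I c ψ)
    (ht : t ∈ I) (x : g) : deriv (fun s => ψ s x) t = -Bh (c t) (ψ t x) := by
  have := H (fun _ => 0) (fun _ => 1) (fun _ => x) (fun _ => 0)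
    contDiffOn_const contDiffOn_const contDiffOn_const contDiffOn_const t ht
  simp only [deriv_const', mul_zero, sub_self, zero_smul, map_zero, smul_zero, add_zero, one_smul,
    zero_add, zero_sub] at this
  rw [← ContinuousLinearMap.neg_apply_apply_of_alt hBh_alt] at this
  exact neg_add_eq_zero.mp this.symm

end BracketCompatibleOn

theorem bracketCompatibility_at_of_hasDerivAt (hBh_alt : ∀ u : h, Bh u u = 0) {f k : ℝ → ℝ} {x y : ℝ → g}
    {f' k' : ℝ} {x' y' : g} {c' : h} {ψ' : g →L[ℝ] h}
    (hf : HasDerivAt f f' t) (hk : HasDerivAt k k' t) (hx : HasDerivAt x x' t)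
    (hy : HasDerivAt y y' t) (hc : HasDerivAt c c' t) (hψ : HasDerivAt ψ ψ' t)
    (hmap : ∀ v w : g, ψ t (Bg v w) = Bh (ψ t v) (ψ t w))
    (hψ' : ∀ v : g, ψ' v = -Bh (c t) (ψ t v)) :
    (f t * k' - k t * f') • c t + ψ t (Bg (x t) (y t) + f t • y' - k t • x')
      = f t • deriv (fun s => k s • c s + ψ s (y s)) t
        - k t • deriv (fun s => f s • c s + ψ s (x s)) t
        + Bh (f t • c t + ψ t (x t)) (k t • c t + ψ t (y t)) := by
  have hky : HasDerivAt (fun s => k s • c s + ψ s (y s)) _ t := (hk.smul hc).add (hψ.clm_apply hy)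
  have hfx : HasDerivAt (fun s => f s • c s + ψ s (x s)) _ t := (hf.smul hc).add (hψ.clm_apply hx)
  rw [hky.deriv, hfx.deriv, hψ', hψ']
  simp only [map_add, map_sub, map_smul, add_apply, smul_apply]
  rw [hmap, hBh_alt, ← ContinuousLinearMap.neg_apply_apply_of_alt hBh_alt (ψ t (x t))]
  module

theorem bracketCompatibleOn_of_map_bracket_of_deriv (hBh_alt : ∀ u : h, Bh u u = 0)
    (hI : IsOpen I) (hc : ContDiffOn ℝ (⊤ : ℕ∞) c I) (hψ : ContDiffOn ℝ (⊤ : ℕ∞) ψ I)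
    (hmap : ∀ t ∈ I, ∀ x y : g, ψ t (Bg x y) = Bh (ψ t x) (ψ t y))
    (hderiv : ∀ t ∈ I, ∀ x : g, deriv (fun s => ψ s x) t = -Bh (c t) (ψ t x)) :
    BracketCompatibleOn Bg Bh I c ψ := by
  intro f k x y hf hk hx hy t ht
  have hψt := hψ.hasDerivAt_deriv (by simp) hI ht
  refine bracketCompatibility_at_of_hasDerivAt hBh_alt (hf.hasDerivAt_deriv (by simp) hI ht)
    (hk.hasDerivAt_deriv (by simp) hI ht) (hx.hasDerivAt_deriv (by simp) hI ht)
    (hy.hasDerivAt_deriv (by simp) hI ht) (hc.hasDerivAt_deriv (by simp) hI ht) hψt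
    (hmap t ht) fun v => ?_
  rw [← hderiv t ht v, (hψt.clm_apply (hasDerivAt_const t v)).deriv]
  simp

end

theorem la_homotopy_lie_algebras_iff_general
    {g : Type*} [NormedAddCommGroup g] [NormedSpace ℝ g]
    {h : Type*} [NormedAddCommGroup h] [NormedSpace ℝ h]
    (Bg : g →L[ℝ] g →L[ℝ] g) (Bh : h →L[ℝ] h →L[ℝ] h)
    (hBh_alt : ∀ u : h, Bh u u = 0)
    (I : Set ℝ) (hIopen : IsOpen I)
    (c : ℝ → h) (ψ : ℝ → (g →L[ℝ] h))
    (hc : ContDiffOn ℝ (⊤ : ℕ∞) c I) (hψ : ContDiffOn ℝ (⊤ : ℕ∞) ψ I) :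
    (∀ (f k : ℝ → ℝ) (x y : ℝ → g),
        ContDiffOn ℝ (⊤ : ℕ∞) f I → ContDiffOn ℝ (⊤ : ℕ∞) k I →
        ContDiffOn ℝ (⊤ : ℕ∞) x I → ContDiffOn ℝ (⊤ : ℕ∞) y I →
        ∀ t ∈ I,
          (f t * deriv k t - k t * deriv f t) • c t
              + ψ t (Bg (x t) (y t) + f t • deriv y t - k t • deriv x t)
            = f t • deriv (fun s => k s • c s + ψ s (y s)) t
              - k t • deriv (fun s => f s • c s + ψ s (x s)) t
              + Bh (f t • c t + ψ t (x t)) (k t • c t + ψ t (y t)))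
      ↔
    ((∀ t ∈ I, ∀ x y : g, ψ t (Bg x y) = Bh (ψ t x) (ψ t y)) ∧
      (∀ t ∈ I, ∀ x : g, deriv (fun s => ψ s x) t = - Bh (c t) (ψ t x))) := by
  change BracketCompatibleOn Bg Bh I c ψ ↔ _
  refine ⟨fun H => ⟨fun t ht => H.map_bracket ht, fun t ht => H.deriv_apply hBh_alt ht⟩, ?_⟩
  rintro ⟨hmap, hderiv⟩
  exact bracketCompatibleOn_of_map_bracket_of_deriv hBh_alt hIopen hc hψ hmap hderiv

/-- **LA-homotopies between Lie algebra morphisms.**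
Let `g` and `h` be finite-dimensional real Lie algebras (encoded as finite-dimensional
normed real vector spaces together with bilinear brackets `Bg`, `Bh` satisfying
alternativity and the (Leibniz form of the) Jacobi identity), and let `I ⊆ ℝ` be an
open interval containing `0` and `1`.  Let `c : I → h` and `ψ : I → Hom_ℝ(g,h)` be
smooth curves.  Then the bracket-compatibility condition (i) saying that the vector
bundle map `Φ : TI × g → h`, `Φ(r·∂ₜ|ₛ, x) = r·c(s) + ψ_s(x)` is a morphism of Lie
algebroids holds if and only if (ii) each `ψ_t` preserves brackets and
`(∂ₜψ)_t(x) = −[c(t), ψ_t(x)]_h` for all `t ∈ I`, `x ∈ g`. -/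
theorem la_homotopy_lie_algebras_iff
    {g : Type*} [NormedAddCommGroup g] [NormedSpace ℝ g] [FiniteDimensional ℝ g]
    {h : Type*} [NormedAddCommGroup h] [NormedSpace ℝ h] [FiniteDimensional ℝ h]
    (Bg : g →L[ℝ] g →L[ℝ] g) (Bh : h →L[ℝ] h →L[ℝ] h)
    (hBg_alt : ∀ x : g, Bg x x = 0)
    (hBg_jac : ∀ x y z : g, Bg x (Bg y z) = Bg (Bg x y) z + Bg y (Bg x z))
    (hBh_alt : ∀ u : h, Bh u u = 0)
    (hBh_jac : ∀ u v w : h, Bh u (Bh v w) = Bh (Bh u v) w + Bh v (Bh u w))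
    (I : Set ℝ) (hIopen : IsOpen I) (hIconn : I.OrdConnected)
    (h0 : (0 : ℝ) ∈ I) (h1 : (1 : ℝ) ∈ I)
    (c : ℝ → h) (ψ : ℝ → (g →L[ℝ] h))
    (hc : ContDiffOn ℝ (⊤ : ℕ∞) c I) (hψ : ContDiffOn ℝ (⊤ : ℕ∞) ψ I) :
    (∀ (f k : ℝ → ℝ) (x y : ℝ → g),
        ContDiffOn ℝ (⊤ : ℕ∞) f I → ContDiffOn ℝ (⊤ : ℕ∞) k I →
        ContDiffOn ℝ (⊤ : ℕ∞) x I → ContDiffOn ℝ (⊤ : ℕ∞) y I →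
        ∀ t ∈ I,
          (f t * deriv k t - k t * deriv f t) • c t
              + ψ t (Bg (x t) (y t) + f t • deriv y t - k t • deriv x t)
            = f t • deriv (fun s => k s • c s + ψ s (y s)) t
              - k t • deriv (fun s => f s • c s + ψ s (x s)) t
              + Bh (f t • c t + ψ t (x t)) (k t • c t + ψ t (y t)))
      ↔
    ((∀ t ∈ I, ∀ x y : g, ψ t (Bg x y) = Bh (ψ t x) (ψ t y)) ∧
      (∀ t ∈ I, ∀ x : g, deriv (fun s => ψ s x) t = - Bh (c t) (ψ t x))) :=
  la_homotopy_lie_algebras_iff_general Bg Bh hBh_alt I hIopen c ψ hc hψ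
end

section
/- Let g and h be finite-dimensional real Lie algebras, let I ⊆ ℝ be an interval containing 0, let c : I → h be a continuous curve, and let ψ : I → Hom_ℝ(g,h) be a differentiable curve satisfying the linear differential equation (∂_t ψ)_t(x) = −[c(t), ψ_t(x)]_h for all t ∈ I and all x ∈ g. If ψ_0 preserves Lie brackets, i.e. ψ_0([x,y]_g) = [ψ_0(x), ψ_0(y)]_h for all x, y ∈ g, then for every t ∈ I the linear map ψ_t : g → h preserves Lie brackets, i.e. ψ_t is a morphism of Lie algebras. -/
/-!
The bracket defect `t ↦ [ψ_t x, ψ_t y] - ψ_t [x, y]` solves the same linear ODE `f' = -[c(t), f]`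
as `ψ_t x` does: `-ad c(t)` is a derivation by the Jacobi identity, and derivations pass through
the product rule for the bracket. The defect vanishes at `t = 0`, hence everywhere by uniqueness of
solutions of linear ODEs, which follows from Grönwall's inequality since `‖ad c(t)‖` is bounded on
compact subintervals.
-/

open Set Filter

theorem hasDerivWithinAt_bilinear_of_derivation
    {𝕜 : Type*} [NontriviallyNormedField 𝕜] {E : Type*} [NormedAddCommGroup E] [NormedSpace 𝕜 E]
    {B : E →L[𝕜] E →L[𝕜] E} {D : E →L[𝕜] E} (hD : ∀ u v, D (B u v) = B (D u) v + B u (D v))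
    {u v : 𝕜 → E} {s : Set 𝕜} {t : 𝕜}
    (hu : HasDerivWithinAt u (D (u t)) s t) (hv : HasDerivWithinAt v (D (v t)) s t) :
    HasDerivWithinAt (fun r ↦ B (u r) (v r)) (D (B (u t) (v t))) s t := by
  rw [hD, add_comm]
  exact B.hasDerivWithinAt_of_bilinear hu hv

section LinearODE

variable {E : Type*} [NormedAddCommGroup E] [NormedSpace ℝ E] {A : ℝ → E →L[ℝ] E}

theorem exists_lipschitzWith_of_continuousOn_Icc {a b : ℝ} (hA : ContinuousOn A (Icc a b)) :
    ∃ K, ∀ t ∈ Icc a b, LipschitzWith K (A t) := by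
  obtain ⟨C, hC⟩ := isCompact_Icc.exists_bound_of_continuousOn hA
  refine ⟨C.toNNReal, fun t ht ↦ (A t).lipschitz.weaken ?_⟩
  rw [← NNReal.coe_le_coe, coe_nnnorm]
  exact (hC t ht).trans (Real.le_coe_toNNReal C)

theorem eqOn_zero_of_linear_ODE {I : Set ℝ} (hI : I.OrdConnected) (hA : ContinuousOn A I)
    {f : ℝ → E} (hf : ∀ t ∈ I, HasDerivWithinAt f (A t (f t)) I t)
    {t₀ : ℝ} (ht₀ : t₀ ∈ I) (hf₀ : f t₀ = 0) : EqOn f 0 I := by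
  have hzero (t : ℝ) (S : Set ℝ) : HasDerivWithinAt (0 : ℝ → E) (A t ((0 : ℝ → E) t)) S t := by
    rw [Pi.zero_apply, map_zero]
    exact hasDerivWithinAt_const t S 0
  intro t ht
  rcases le_total t₀ t with hle | hle
  · have hsub := hI.out ht₀ ht
    obtain ⟨K, hK⟩ := exists_lipschitzWith_of_continuousOn_Icc (hA.mono hsub)
    refine ODE_solution_unique_of_mem_Icc_right (s := fun _ ↦ univ)
      (fun s hs ↦ (hK s (Ico_subset_Icc_self hs)).lipschitzOnWith)
      (fun s hs ↦ (hf s (hsub hs)).continuousWithinAt.mono hsub)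
      (fun s hs ↦ (hf s (hsub (Ico_subset_Icc_self hs))).mono_of_mem_nhdsWithin
        (mem_of_superset (Icc_mem_nhdsGE hs.2) (hI.out (hsub (Ico_subset_Icc_self hs)) ht)))
      (fun _ _ ↦ mem_univ _) continuousOn_const (fun s _ ↦ hzero s _) (fun _ _ ↦ mem_univ _)
      hf₀ ⟨hle, le_rfl⟩
  · have hsub := hI.out ht ht₀
    obtain ⟨K, hK⟩ := exists_lipschitzWith_of_continuousOn_Icc (hA.mono hsub)
    refine ODE_solution_unique_of_mem_Icc_left (s := fun _ ↦ univ)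
      (fun s hs ↦ (hK s (Ioc_subset_Icc_self hs)).lipschitzOnWith)
      (fun s hs ↦ (hf s (hsub hs)).continuousWithinAt.mono hsub)
      (fun s hs ↦ (hf s (hsub (Ioc_subset_Icc_self hs))).mono_of_mem_nhdsWithin
        (mem_of_superset (Icc_mem_nhdsLE hs.1) (hI.out ht (hsub (Ioc_subset_Icc_self hs)))))
      (fun _ _ ↦ mem_univ _) continuousOn_const (fun s _ ↦ hzero s _) (fun _ _ ↦ mem_univ _)
      hf₀ ⟨le_rfl, hle⟩

end LinearODE

theorem bracket_preserving_along_ode_general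
    {g : Type*} [NormedAddCommGroup g] [NormedSpace ℝ g]
    {h : Type*} [NormedAddCommGroup h] [NormedSpace ℝ h]
    (Bg : g →L[ℝ] g →L[ℝ] g) (Bh : h →L[ℝ] h →L[ℝ] h)
    (hBh_jac : ∀ u v w : h, Bh u (Bh v w) = Bh (Bh u v) w + Bh v (Bh u w))
    (I : Set ℝ) (hIconn : I.OrdConnected) (h0 : (0 : ℝ) ∈ I)
    (c : ℝ → h) (hc : ContinuousOn c I)
    (ψ : ℝ → (g →L[ℝ] h))
    (hode : ∀ t ∈ I, ∀ x : g,
      HasDerivWithinAt (fun s => ψ s x) (- Bh (c t) (ψ t x)) I t)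
    (hψ0 : ∀ x y : g, ψ 0 (Bg x y) = Bh (ψ 0 x) (ψ 0 y)) :
    ∀ t ∈ I, ∀ x y : g, ψ t (Bg x y) = Bh (ψ t x) (ψ t y) := by
  intro t ht x y
  have hA : ContinuousOn (fun s ↦ -Bh (c s)) I := (Bh.continuous.comp_continuousOn hc).neg
  have hderivation (s : ℝ) (u v : h) :
      (-Bh (c s)) (Bh u v) = Bh ((-Bh (c s)) u) v + Bh u ((-Bh (c s)) v) := by
    simp only [neg_apply, map_neg]
    rw [hBh_jac, neg_add]
  have hdefect : ∀ s ∈ I, HasDerivWithinAt (fun r ↦ Bh (ψ r x) (ψ r y) - ψ r (Bg x y))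
      ((-Bh (c s)) (Bh (ψ s x) (ψ s y) - ψ s (Bg x y))) I s := fun s hs ↦ by
    rw [map_sub]
    exact (hasDerivWithinAt_bilinear_of_derivation (hderivation s)
      (hode s hs x) (hode s hs y)).sub (hode s hs (Bg x y))
  have := eqOn_zero_of_linear_ODE hIconn hA hdefect h0 (by rw [hψ0, sub_self]) ht
  exact (sub_eq_zero.mp this).symm

/-- If `ψ : I → Hom_ℝ(g,h)` is a differentiable curve satisfying the linear ODE
`(∂ₜψ)_t(x) = −[c(t), ψ_t(x)]_h` on an interval `I ∋ 0` for a continuous curve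
`c : I → h`, and if `ψ_0` preserves Lie brackets, then `ψ_t` preserves Lie brackets
for every `t ∈ I`, i.e. `ψ_t` is a morphism of Lie algebras. -/
theorem bracket_preserving_along_ode
    {g : Type*} [NormedAddCommGroup g] [NormedSpace ℝ g] [FiniteDimensional ℝ g]
    {h : Type*} [NormedAddCommGroup h] [NormedSpace ℝ h] [FiniteDimensional ℝ h]
    (Bg : g →L[ℝ] g →L[ℝ] g) (Bh : h →L[ℝ] h →L[ℝ] h)
    (hBg_alt : ∀ x : g, Bg x x = 0)
    (hBg_jac : ∀ x y z : g, Bg x (Bg y z) = Bg (Bg x y) z + Bg y (Bg x z))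
    (hBh_alt : ∀ u : h, Bh u u = 0)
    (hBh_jac : ∀ u v w : h, Bh u (Bh v w) = Bh (Bh u v) w + Bh v (Bh u w))
    (I : Set ℝ) (hIconn : I.OrdConnected) (h0 : (0 : ℝ) ∈ I)
    (c : ℝ → h) (hc : ContinuousOn c I)
    (ψ : ℝ → (g →L[ℝ] h))
    (hode : ∀ t ∈ I, ∀ x : g,
      HasDerivWithinAt (fun s => ψ s x) (- Bh (c t) (ψ t x)) I t)
    (hψ0 : ∀ x y : g, ψ 0 (Bg x y) = Bh (ψ 0 x) (ψ 0 y)) :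
    ∀ t ∈ I, ∀ x y : g, ψ t (Bg x y) = Bh (ψ t x) (ψ t y) :=
  bracket_preserving_along_ode_general Bg Bh hBh_jac I hIconn h0 c hc ψ hode hψ0
end

section
/- Let g and h be finite-dimensional real Lie algebras, let I ⊆ ℝ be an open interval containing 0 and 1, let c : I → h be a smooth curve, and let ψ : I → Hom_ℝ(g,h) be a differentiable curve such that ψ_0 is a morphism of Lie algebras and (∂_t ψ)_t(x) = −[c(t), ψ_t(x)]_h for all t ∈ I and x ∈ g. Then there exists a differentiable curve u : I → End_ℝ(h) such that: u_0 = id_h; for every t ∈ I, (∂_t u)_t(w) = −[c(t), u_t(w)]_h for all w ∈ h; for every t ∈ I the map u_t is a Lie algebra automorphism of h, i.e. a linear bijection with u_t([v,w]_h) = [u_t(v), u_t(w)]_h for all v, w ∈ h; and ψ_t = u_t ∘ ψ_0 for all t ∈ I. In other words, ψ is a deformation of ψ_0 by a curve of Lie algebra automorphisms of h starting at the identity (in the paper these automorphisms are realized as u_t = Ad_{h(t)} for a smooth curve h(t) in the simply connected Lie group integrating h, so that ψ is a trivial deformation of ψ_0). -/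
/-!
With `A t := -ad (c t)`, the Jacobi identity says that each `A t` is a derivation of the
bracket. The linear ODE `U' = A t ∘ U`, `U 0 = id` has a solution on all of `I`: the Picard
series, whose `n`-th term is bounded by `‖y₀‖ (K |t|)ⁿ / n!` on compact subintervals, converges
together with its derivative. Uniqueness for linear ODEs then does the rest: `s ↦ ψ s x` and
`s ↦ U s (ψ 0 x)` solve the same equation; so do `s ↦ U s [v, w]` and `s ↦ [U s v, U s w]`,
because `A s` is a derivation; and `U t w = 0` forces `w = 0` (compare with the zero solution
at time `t`), so `U t` is bijective as `h` is finite-dimensional.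
-/

open Set intervalIntegral
open scoped Nat

theorem IsOpen.exists_Icc_subset_of_ordConnected {I : Set ℝ} (hI : IsOpen I)
    (hI' : I.OrdConnected) {x y : ℝ} (hx : x ∈ I) (hy : y ∈ I) :
    ∃ a b, x ∈ Ioo a b ∧ y ∈ Ioo a b ∧ Icc a b ⊆ I := by
  obtain ⟨a₁, b₁, -, hx₁, hI₁⟩ := exists_Icc_mem_subset_of_mem_nhds (hI.mem_nhds hx)
  obtain ⟨a₂, b₂, -, hy₂, hI₂⟩ := exists_Icc_mem_subset_of_mem_nhds (hI.mem_nhds hy)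
  rw [Icc_mem_nhds_iff] at hx₁ hy₂
  have ha : min a₁ a₂ ∈ I := by
    rcases min_choice a₁ a₂ with h | h <;> rw [h]
    exacts [hI₁ (left_mem_Icc.2 (hx₁.1.trans hx₁.2).le),
      hI₂ (left_mem_Icc.2 (hy₂.1.trans hy₂.2).le)]
  have hb : max b₁ b₂ ∈ I := by
    rcases max_choice b₁ b₂ with h | h <;> rw [h]
    exacts [hI₁ (right_mem_Icc.2 (hx₁.1.trans hx₁.2).le),
      hI₂ (right_mem_Icc.2 (hy₂.1.trans hy₂.2).le)]
  exact ⟨min a₁ a₂, max b₁ b₂,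
    ⟨min_lt_of_left_lt hx₁.1, lt_max_of_lt_left hx₁.2⟩,
    ⟨min_lt_of_right_lt hy₂.1, lt_max_of_lt_right hy₂.2⟩, hI'.out ha hb⟩

theorem abs_integral_abs_pow (t : ℝ) (n : ℕ) :
    |∫ s in (0 : ℝ)..t, |s| ^ n| = |t| ^ (n + 1) / (n + 1) := by
  have hnonneg : ∀ t : ℝ, 0 ≤ t → ∫ s in (0 : ℝ)..t, |s| ^ n = t ^ (n + 1) / (n + 1) := by
    intro t ht
    rw [integral_congr (g := fun s => s ^ n) fun s hs => by
      rw [uIcc_of_le ht] at hs; rw [abs_of_nonneg hs.1], integral_pow]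
    simp
  rcases le_total 0 t with ht | ht
  · rw [hnonneg t ht, abs_of_nonneg ht, abs_of_nonneg (by positivity)]
  · have hneg : ∫ s in (0 : ℝ)..t, |s| ^ n = -∫ s in (0 : ℝ)..-t, |s| ^ n := by
      simpa [integral_symm (-t)] using integral_comp_neg (a := 0) (b := t) fun s => |s| ^ n
    rw [hneg, hnonneg (-t) (neg_nonneg.2 ht), abs_neg, abs_of_nonpos ht,
      abs_of_nonneg (by have := neg_nonneg.2 ht; positivity)]

section LinearODE

variable {E : Type*} [NormedAddCommGroup E] [NormedSpace ℝ E]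
  {I : Set ℝ} {A : ℝ → E →L[ℝ] E}

theorem ContinuousOn.hasDerivAt_integral_of_ordConnected [CompleteSpace E] {f : ℝ → E}
    (hf : ContinuousOn f I) (hI : IsOpen I) (hI' : I.OrdConnected) {a t : ℝ} (ha : a ∈ I)
    (ht : t ∈ I) :
    HasDerivAt (fun u => ∫ s in a..u, f s) (f t) t :=
  integral_hasDerivAt_right (hf.mono (hI'.uIcc_subset ha ht)).intervalIntegrable
    (hf.stronglyMeasurableAtFilter hI _ ht) (hf.continuousAt (hI.mem_nhds ht))

/-- The `n`-th term of the Picard series of `y' = A t y`, `y 0 = y₀`. -/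
noncomputable def picardTerm (A : ℝ → E →L[ℝ] E) (y₀ : E) : ℕ → ℝ → E
  | 0 => fun _ => y₀
  | n + 1 => fun t => ∫ s in (0 : ℝ)..t, A s (picardTerm A y₀ n s)

theorem picardTerm_succ_zero (y₀ : E) (n : ℕ) : picardTerm A y₀ (n + 1) 0 = 0 :=
  integral_same

theorem continuousOn_picardTerm [CompleteSpace E] (hI : IsOpen I) (hI' : I.OrdConnected)
    (h0 : (0 : ℝ) ∈ I) (hA : ContinuousOn A I) (y₀ : E) (n : ℕ) :
    ContinuousOn (picardTerm A y₀ n) I := by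
  induction n with
  | zero => exact continuousOn_const
  | succ n ih => exact fun t ht =>
      ((hA.clm_apply ih).hasDerivAt_integral_of_ordConnected hI hI' h0 ht).continuousAt
        |>.continuousWithinAt

theorem hasDerivAt_picardTerm_succ [CompleteSpace E] (hI : IsOpen I) (hI' : I.OrdConnected)
    (h0 : (0 : ℝ) ∈ I) (hA : ContinuousOn A I) (y₀ : E) (n : ℕ) {t : ℝ} (ht : t ∈ I) :
    HasDerivAt (picardTerm A y₀ (n + 1)) (A t (picardTerm A y₀ n t)) t :=
  (hA.clm_apply (continuousOn_picardTerm hI hI' h0 hA y₀ n)).hasDerivAt_integral_of_ordConnected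
    hI hI' h0 ht

theorem norm_picardTerm_le {a b K : ℝ} (h0 : (0 : ℝ) ∈ Icc a b)
    (hK : ∀ s ∈ Icc a b, ‖A s‖ ≤ K) (y₀ : E) (n : ℕ) {t : ℝ} (ht : t ∈ Icc a b) :
    ‖picardTerm A y₀ n t‖ ≤ ‖y₀‖ * (K * |t|) ^ n / n ! := by
  have hK₀ : 0 ≤ K := (norm_nonneg _).trans (hK 0 h0)
  induction n generalizing t with
  | zero => simp [picardTerm]
  | succ n ih =>
    have hbound : ∀ s ∈ uIoc (0 : ℝ) t,
        ‖A s (picardTerm A y₀ n s)‖ ≤ ‖y₀‖ * K ^ (n + 1) / n ! * |s| ^ n := by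
      intro s hs
      have hs' := uIcc_subset_Icc h0 ht (uIoc_subset_uIcc hs)
      calc ‖A s (picardTerm A y₀ n s)‖ ≤ K * (‖y₀‖ * (K * |s|) ^ n / n !) :=
            (A s).le_of_opNorm_le_of_le (hK s hs') (ih hs')
        _ = _ := by ring
    calc ‖picardTerm A y₀ (n + 1) t‖
        ≤ |∫ s in (0 : ℝ)..t, ‖y₀‖ * K ^ (n + 1) / n ! * |s| ^ n| :=
          norm_integral_le_abs_of_norm_le
            (MeasureTheory.ae_restrict_of_forall_mem measurableSet_uIoc hbound)
            (Continuous.intervalIntegrable (by fun_prop) _ _)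
      _ = ‖y₀‖ * (K * |t|) ^ (n + 1) / (n + 1)! := by
          rw [integral_const_mul, abs_mul, abs_integral_abs_pow, abs_of_nonneg (by positivity),
            Nat.factorial_succ]
          push_cast
          field_simp
          ring

theorem exists_hasDerivAt_linear_ode [CompleteSpace E] (hI : IsOpen I) (hI' : I.OrdConnected)
    (h0 : (0 : ℝ) ∈ I) (hA : ContinuousOn A I) (y₀ : E) :
    ∃ y : ℝ → E, y 0 = y₀ ∧ ∀ t ∈ I, HasDerivAt y (A t (y t)) t := by
  refine ⟨fun t => y₀ + ∑' n, picardTerm A y₀ (n + 1) t, by simp [picardTerm_succ_zero], ?_⟩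
  intro t ht
  obtain ⟨a, b, h0ab, htab, hab⟩ := hI.exists_Icc_subset_of_ordConnected hI' h0 ht
  obtain ⟨K, hK⟩ := isCompact_Icc.exists_bound_of_continuousOn (hA.mono hab)
  set M := max |a| |b|
  have hM : ∀ s ∈ Icc a b, |s| ≤ M := fun s hs => abs_le_max_abs_abs hs.1 hs.2
  have hterm : ∀ n, ∀ s ∈ Icc a b, ‖picardTerm A y₀ n s‖ ≤ ‖y₀‖ * (K * M) ^ n / n ! := by
    intro n s hs
    have hK₀ : 0 ≤ K := (norm_nonneg _).trans (hK 0 (Ioo_subset_Icc_self h0ab))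
    refine (norm_picardTerm_le (Ioo_subset_Icc_self h0ab) hK y₀ n hs).trans ?_
    gcongr
    exact hM s hs
  have hsum : Summable fun n => ‖y₀‖ * (K * M) ^ n / n ! := by
    simpa only [mul_div_assoc] using (Real.summable_pow_div_factorial (K * M)).mul_left ‖y₀‖
  have hseries := hasDerivAt_tsum_of_isPreconnected (g := fun n => picardTerm A y₀ (n + 1))
    (g' := fun n s => A s (picardTerm A y₀ n s)) (hsum.mul_left K) isOpen_Ioo isPreconnected_Ioo
    (fun n s hs => hasDerivAt_picardTerm_succ hI hI' h0 hA y₀ n (hab (Ioo_subset_Icc_self hs)))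
    (fun n s hs => (A s).le_of_opNorm_le_of_le (hK s (Ioo_subset_Icc_self hs))
      (hterm n s (Ioo_subset_Icc_self hs)))
    h0ab (by simp [picardTerm_succ_zero]) htab
  have hvalue :
      ∑' n, A t (picardTerm A y₀ n t) = A t (y₀ + ∑' n, picardTerm A y₀ (n + 1) t) := by
    have hs : Summable fun n => picardTerm A y₀ n t :=
      hsum.of_norm_bounded fun n => hterm n t (Ioo_subset_Icc_self htab)
    rw [← (A t).map_tsum hs, hs.tsum_eq_zero_add]
    rfl
  simpa only [hvalue] using hseries.const_add y₀

theorem exists_hasDerivAt_fundamental [CompleteSpace E] (hI : IsOpen I) (hI' : I.OrdConnected)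
    (h0 : (0 : ℝ) ∈ I) (hA : ContinuousOn A I) :
    ∃ U : ℝ → E →L[ℝ] E, U 0 = ContinuousLinearMap.id ℝ E ∧
      ∀ t ∈ I, ∀ w, HasDerivAt (fun s => U s w) (A t (U t w)) t := by
  obtain ⟨U, hU0, hU⟩ := exists_hasDerivAt_linear_ode hI hI' h0
    ((ContinuousLinearMap.compL ℝ E E E).continuous.comp_continuousOn hA)
    (ContinuousLinearMap.id ℝ E)
  exact ⟨U, hU0, fun t ht w => by simpa using (hU t ht).clm_apply (hasDerivAt_const t w)⟩

theorem eqOn_of_hasDerivAt_linear_ode (hI : IsOpen I) (hI' : I.OrdConnected)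
    (hA : ContinuousOn A I) {y z : ℝ → E} (hy : ∀ t ∈ I, HasDerivAt y (A t (y t)) t)
    (hz : ∀ t ∈ I, HasDerivAt z (A t (z t)) t) {t₀ : ℝ} (ht₀ : t₀ ∈ I) (h : y t₀ = z t₀) :
    EqOn y z I := by
  intro t ht
  obtain ⟨a, b, ht₀ab, htab, hab⟩ := hI.exists_Icc_subset_of_ordConnected hI' ht₀ ht
  obtain ⟨K, hK⟩ := isCompact_Icc.exists_bound_of_continuousOn (hA.mono hab)
  have hlip : ∀ s ∈ Ioo a b, LipschitzOnWith K.toNNReal (A s) univ := fun s hs =>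
    ((A s).lipschitz.weaken (by
      simpa using Real.toNNReal_le_toNNReal (hK s (Ioo_subset_Icc_self hs)))).lipschitzOnWith
  exact ODE_solution_unique_of_mem_Ioo hlip ht₀ab
    (fun s hs => ⟨hy s (hab (Ioo_subset_Icc_self hs)), mem_univ _⟩)
    (fun s hs => ⟨hz s (hab (Ioo_subset_Icc_self hs)), mem_univ _⟩) h htab

theorem bijective_of_hasDerivAt_fundamental [FiniteDimensional ℝ E] (hI : IsOpen I)
    (hI' : I.OrdConnected) (h0 : (0 : ℝ) ∈ I) (hA : ContinuousOn A I) {U : ℝ → E →L[ℝ] E}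
    (hU0 : U 0 = ContinuousLinearMap.id ℝ E)
    (hU : ∀ t ∈ I, ∀ w, HasDerivAt (fun s => U s w) (A t (U t w)) t) {t : ℝ} (ht : t ∈ I) :
    Function.Bijective (U t) := by
  have hinj : Function.Injective (U t : E →ₗ[ℝ] E) := by
    refine (injective_iff_map_eq_zero (U t)).2 fun w hw => ?_
    have hzero : ∀ s ∈ I, HasDerivAt (fun _ => (0 : E)) (A s 0) s := fun s _ => by
      simpa using hasDerivAt_const s (0 : E)
    simpa [hU0] using eqOn_of_hasDerivAt_linear_ode hI hI' hA (hU · · w) hzero ht hw h0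
  exact ⟨hinj, LinearMap.injective_iff_surjective.1 hinj⟩

theorem map_bilinear_of_hasDerivAt_derivation (B : E →L[ℝ] E →L[ℝ] E) (hI : IsOpen I)
    (hI' : I.OrdConnected) (h0 : (0 : ℝ) ∈ I) (hA : ContinuousOn A I)
    (hder : ∀ t ∈ I, ∀ v w, A t (B v w) = B (A t v) w + B v (A t w)) {U : ℝ → E →L[ℝ] E}
    (hU0 : U 0 = ContinuousLinearMap.id ℝ E)
    (hU : ∀ t ∈ I, ∀ w, HasDerivAt (fun s => U s w) (A t (U t w)) t) {t : ℝ} (ht : t ∈ I)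
    (v w : E) : U t (B v w) = B (U t v) (U t w) := by
  have hBU : ∀ s ∈ I, HasDerivAt (fun r => B (U r v) (U r w)) (A s (B (U s v) (U s w))) s := by
    intro s hs
    rw [hder s hs, add_comm]
    exact B.hasDerivAt_of_bilinear (fun _ => hU s hs v) (fun _ => hU s hs w)
  exact eqOn_of_hasDerivAt_linear_ode hI hI' hA (hU · · (B v w)) hBU h0 (by simp [hU0]) ht

end LinearODE

theorem la_homotopy_is_trivial_deformation_general
    {g : Type*} [NormedAddCommGroup g] [NormedSpace ℝ g]
    {h : Type*} [NormedAddCommGroup h] [NormedSpace ℝ h] [FiniteDimensional ℝ h]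
    (Bh : h →L[ℝ] h →L[ℝ] h)
    (hBh_jac : ∀ u v w : h, Bh u (Bh v w) = Bh (Bh u v) w + Bh v (Bh u w))
    (I : Set ℝ) (hIopen : IsOpen I) (hIconn : I.OrdConnected)
    (h0 : (0 : ℝ) ∈ I)
    (c : ℝ → h) (hc : ContDiffOn ℝ (⊤ : ℕ∞) c I)
    (ψ : ℝ → (g →L[ℝ] h))
    (hode : ∀ t ∈ I, ∀ x : g,
      HasDerivAt (fun s => ψ s x) (- Bh (c t) (ψ t x)) t) :
    ∃ u : ℝ → (h →L[ℝ] h),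
      u 0 = ContinuousLinearMap.id ℝ h ∧
      (∀ t ∈ I, ∀ w : h, HasDerivAt (fun s => u s w) (- Bh (c t) (u t w)) t) ∧
      (∀ t ∈ I, Function.Bijective (u t)) ∧
      (∀ t ∈ I, ∀ v w : h, u t (Bh v w) = Bh (u t v) (u t w)) ∧
      (∀ t ∈ I, ψ t = (u t).comp (ψ 0)) := by
  have hA : ContinuousOn (fun t => -Bh (c t)) I :=
    (Bh.continuous.comp_continuousOn hc.continuousOn).neg
  have hder : ∀ t ∈ I, ∀ v w : h,
      -Bh (c t) (Bh v w) = Bh (-Bh (c t) v) w + Bh v (-Bh (c t) w) := fun t _ v w => by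
    rw [hBh_jac, neg_add, map_neg, neg_apply, map_neg]
  obtain ⟨u, hu0, hu⟩ := exists_hasDerivAt_fundamental hIopen hIconn h0 hA
  refine ⟨u, hu0, hu,
    fun t ht => bijective_of_hasDerivAt_fundamental hIopen hIconn h0 hA hu0 hu ht,
    fun t ht => map_bilinear_of_hasDerivAt_derivation Bh hIopen hIconn h0 hA hder hu0 hu ht,
    fun t ht => ?_⟩
  ext x
  exact eqOn_of_hasDerivAt_linear_ode hIopen hIconn hA (hode · · x) (hu · · (ψ 0 x)) h0
    (by simp [hu0]) ht

/-- **LA-homotopies of Lie algebra morphisms are trivial deformations.**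
If `(c, ψ)` is the data of an LA-homotopy between Lie algebra morphisms `g → h`
(i.e. `c : I → h` is smooth, `ψ : I → Hom_ℝ(g,h)` is differentiable, `ψ_0` is a Lie
algebra morphism and `(∂ₜψ)_t(x) = −[c(t), ψ_t(x)]_h` on the open interval `I` with
`0, 1 ∈ I`), then there is a differentiable curve `u : I → End_ℝ(h)` with `u_0 = id`,
`(∂ₜu)_t(w) = −[c(t), u_t(w)]_h`, each `u_t` a Lie algebra automorphism of `h`, and
`ψ_t = u_t ∘ ψ_0` for all `t ∈ I`: `ψ` is a trivial deformation of `ψ_0`. -/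
theorem la_homotopy_is_trivial_deformation
    {g : Type*} [NormedAddCommGroup g] [NormedSpace ℝ g] [FiniteDimensional ℝ g]
    {h : Type*} [NormedAddCommGroup h] [NormedSpace ℝ h] [FiniteDimensional ℝ h]
    (Bg : g →L[ℝ] g →L[ℝ] g) (Bh : h →L[ℝ] h →L[ℝ] h)
    (hBg_alt : ∀ x : g, Bg x x = 0)
    (hBg_jac : ∀ x y z : g, Bg x (Bg y z) = Bg (Bg x y) z + Bg y (Bg x z))
    (hBh_alt : ∀ u : h, Bh u u = 0)
    (hBh_jac : ∀ u v w : h, Bh u (Bh v w) = Bh (Bh u v) w + Bh v (Bh u w))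
    (I : Set ℝ) (hIopen : IsOpen I) (hIconn : I.OrdConnected)
    (h0 : (0 : ℝ) ∈ I) (h1 : (1 : ℝ) ∈ I)
    (c : ℝ → h) (hc : ContDiffOn ℝ (⊤ : ℕ∞) c I)
    (ψ : ℝ → (g →L[ℝ] h))
    (hψ0 : ∀ x y : g, ψ 0 (Bg x y) = Bh (ψ 0 x) (ψ 0 y))
    (hode : ∀ t ∈ I, ∀ x : g,
      HasDerivAt (fun s => ψ s x) (- Bh (c t) (ψ t x)) t) :
    ∃ u : ℝ → (h →L[ℝ] h),
      u 0 = ContinuousLinearMap.id ℝ h ∧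
      (∀ t ∈ I, ∀ w : h, HasDerivAt (fun s => u s w) (- Bh (c t) (u t w)) t) ∧
      (∀ t ∈ I, Function.Bijective (u t)) ∧
      (∀ t ∈ I, ∀ v w : h, u t (Bh v w) = Bh (u t v) (u t w)) ∧
      (∀ t ∈ I, ψ t = (u t).comp (ψ 0)) :=
  la_homotopy_is_trivial_deformation_general Bh hBh_jac I hIopen hIconn h0 c hc ψ hode
end
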